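/- Let L be an LTS, ψ a conjunction-free formula in canonical form, U a realisable ψ-avoiding sequence in L with realisation witness (v_0, …, v_{l+1}), and k ≥ 1. Then every k-pumping ρ_k of (U, v_0, …, v_{l+1}) satisfies (ρ_k, k) ⊭ F_p^∞ ψ. -/

import Mathlib

open scoped Classical
open MeasureTheory

/-- A labelled transition system: a finite set of states `S`, an initial state,
a transition relation in which every state has at least one successor, and a
labeling of states by sets of atomic propositions. -/
structure LTS (S AP : Type) where
  init : S
  T : S → S → Prop
  lbl : S → Set AP
  succ_nonempty : ∀ s : S, ∃ t : S, T s t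

variable {S AP : Type}

/-- A run of an LTS: an infinite sequence of states following the transitions. -/
def IsRun (L : LTS S AP) (ρ : ℕ → S) : Prop := ∀ i : ℕ, L.T (ρ i) (ρ (i + 1))

/-- The shifted run `ρ[i..]`. -/
def shift (ρ : ℕ → S) (i : ℕ) : ℕ → S := fun n => ρ (n + i)

/-- A state formula: a (possibly empty, i.e. `false`) disjunction of literals,
each literal being a polarity (`true` = positive) paired with an atomic proposition. -/
abbrev StateFormula (AP : Type) := List (Bool × AP)

/-- A state `s` satisfies a state formula `θ`. -/
def SatState (L : LTS S AP) (θ : StateFormula AP) (s : S) : Prop :=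
  ∃ p ∈ θ, if p.1 then p.2 ∈ L.lbl s else p.2 ∉ L.lbl s

/-- A conjunction-free formula in canonical form `ψ = θ ∨ ⋁ F_p^∞ ψᵢ`, identified
with its tree `T(ψ)`: a root labeled by the state formula `θ` whose children are
the trees of the `ψᵢ`. -/
inductive CTree (AP : Type) : Type where
  | node : StateFormula AP → List (CTree AP) → CTree AP

/-- Satisfaction `(ρ, k) ⊨ ψ` for a canonical conjunction-free formula
`ψ = θ ∨ ⋁ F_p^∞ ψᵢ`. -/
def SatC (L : LTS S AP) : CTree AP → (ℕ → S) → ℕ → Prop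
  | .node θ cs, ρ, k =>
      SatState L θ (ρ 0) ∨
      ∃ c ∈ cs.attach, ∀ i : ℕ, ∃ j ≤ k, SatC L c.1 (shift ρ (i + j)) k
termination_by t => sizeOf t
decreasing_by
  have := List.sizeOf_lt_of_mem c.2
  simp only [CTree.node.sizeOf_spec]
  omega

/-- Satisfaction `(ρ, k) ⊨ F_p^∞ ψ` for a canonical conjunction-free formula `ψ`. -/
def SatFinfC (L : LTS S AP) (t : CTree AP) (ρ : ℕ → S) (k : ℕ) : Prop :=
  ∀ i : ℕ, ∃ j ≤ k, SatC L t (shift ρ (i + j)) k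

/-- `Interleave l₁ l₂ l`: `l` is an interleaving (shuffle) of `l₁` and `l₂`. -/
inductive Interleave {α : Type} : List α → List α → List α → Prop where
  | nil : Interleave [] [] []
  | left {a : α} {l₁ l₂ l : List α} : Interleave l₁ l₂ l → Interleave (a :: l₁) l₂ (a :: l)
  | right {a : α} {l₁ l₂ l : List α} : Interleave l₁ l₂ l → Interleave l₁ (a :: l₂) (a :: l)

mutual
/-- `LinExt t l`: the list `l` of state-formula labels enumerates the nodes of the
tree `t` in a linear order extending the ancestor order of the tree (the root comes
first, followed by an interleaving of linear extensions of the children's subtrees). -/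
inductive LinExt {AP : Type} : CTree AP → List (StateFormula AP) → Prop where
  | node {θ : StateFormula AP} {cs : List (CTree AP)} {l : List (StateFormula AP)} :
      LinExtF cs l → LinExt (.node θ cs) (θ :: l)

/-- Linear extensions of a forest: interleavings of linear extensions of its trees. -/
inductive LinExtF {AP : Type} : List (CTree AP) → List (StateFormula AP) → Prop where
  | nil : LinExtF [] []
  | cons {t : CTree AP} {ts : List (CTree AP)} {l₁ l₂ l : List (StateFormula AP)} :
      LinExt t l₁ → LinExtF ts l₂ → Interleave l₁ l₂ l → LinExtF (t :: ts) l
end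

/-- A (nonempty) finite path of the LTS. -/
def IsPath (L : LTS S AP) (u : List S) : Prop := u ≠ [] ∧ u.Chain' L.T

/-- A loop: a finite path with at least one transition whose first and last states coincide. -/
def IsLoop (L : LTS S AP) (u : List S) : Prop :=
  2 ≤ u.length ∧ u.Chain' L.T ∧ u.head? = u.getLast?

/-- The set `occ u` of states occurring in a finite sequence. -/
def occ (u : List S) : Set S := {s | s ∈ u}

/-- A `ψ`-avoiding sequence: a linear ordering of the nodes of `T(ψ)` extending the
ancestor order together with, for each node labeled by a state formula `θ`, a loop
whose set of states is a `θ`-avoiding cycle. -/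
structure AvoidingSeq (L : LTS S AP) (ψ : CTree AP) where
  labels : List (StateFormula AP)
  loops : List (List S)
  linext : LinExt ψ labels
  length_eq : loops.length = labels.length
  isLoop : ∀ u ∈ loops, IsLoop L u
  avoid : ∀ p ∈ loops.zip labels, ∀ s ∈ p.1, ¬ SatState L p.2 s

/-- `(vs, tail)` is a realisation witness for the loops `u₀, …, u_l` of an avoiding
sequence: finite paths `v₀, …, v_l` and an infinite run `v_{l+1} = tail`, where `v₀`
starts at the initial state, `vᵢ` starts in `occ u_{i-1}` for `1 ≤ i ≤ l+1`, and
`vᵢ` ends in `occ uᵢ` for `0 ≤ i ≤ l`. -/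
def IsRealWitness (L : LTS S AP) (loops vs : List (List S)) (tail : ℕ → S) : Prop :=
  vs.length = loops.length ∧
  (∀ v ∈ vs, IsPath L v) ∧
  IsRun L tail ∧
  (∀ h : 0 < vs.length, (vs.get ⟨0, h⟩).head? = some L.init) ∧
  (∀ (i : ℕ) (h : i + 1 < vs.length) (h' : i < loops.length) (s : S),
      (vs.get ⟨i + 1, h⟩).head? = some s → s ∈ occ (loops.get ⟨i, h'⟩)) ∧
  (∀ (i : ℕ) (h : i < vs.length) (h' : i < loops.length) (s : S),
      (vs.get ⟨i, h⟩).getLast? = some s → s ∈ occ (loops.get ⟨i, h'⟩)) ∧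
  (∀ h : 0 < loops.length,
      tail 0 ∈ occ (loops.get ⟨loops.length - 1, Nat.sub_lt h Nat.one_pos⟩))

/-- An avoiding sequence is realisable in `L` if it admits a realisation witness. -/
def Realisable {ψ : CTree AP} (L : LTS S AP) (U : AvoidingSeq L ψ) : Prop :=
  ∃ (vs : List (List S)) (tail : ℕ → S), IsRealWitness L U.loops vs tail

/-- Prepend a finite word to an infinite sequence. -/
def appendSeq (w : List S) (ρ : ℕ → S) : ℕ → S :=
  fun n => if h : n < w.length then w.get ⟨n, h⟩ else ρ (n - w.length)

/-- The finite word `v₀ (u₀)^k v₁ (u₁)^k ⋯ v_l (u_l)^k`. -/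
def pumpPrefix (k : ℕ) : List (List S) → List (List S) → List S
  | v :: vs, u :: us => v ++ (List.replicate k u).flatten ++ pumpPrefix k vs us
  | _, _ => []

/-- The `k`-pumping `v₀ (u₀)^k v₁ (u₁)^k ⋯ v_l (u_l)^k v_{l+1}` of a realisation
witness, where each loop `uᵢ` is traversed `k` consecutive times. -/
def pumpRun (k : ℕ) (vs loops : List (List S)) (tail : ℕ → S) : ℕ → S :=
  appendSeq (pumpPrefix k vs loops) tail

/-!
In the `k`-pumping the block `(uᵢ)^k` spans at least `k + 1` consecutive positions (a loop has
a transition and `k ≥ 1`), all in the `θᵢ`-avoiding cycle `occ uᵢ`. So node `nᵢ` of `T(ψ)` gets a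
window `[pᵢ, pᵢ + k]` on which `θᵢ` fails, with `pᵢ + k ≤ pᵢ₊₁`. Now induct on the tree: if
`F_p^∞ ψ` held from before the root's window, `ψ` would hold at some `p + j` with `j ≤ k`; the
root's state formula fails there, so some `F_p^∞ ψᵢ` holds there, hence, being closed under
suffixes, from `p + k` on. But the nodes of `T(ψᵢ)` come after the root in the linear extension,
so their windows lie beyond `p + k`, which contradicts the induction hypothesis.
-/

lemma shift_shift (ρ : ℕ → S) (a b : ℕ) : shift (shift ρ a) b = shift ρ (a + b) := by
  funext n
  simp only [shift, Nat.add_assoc, Nat.add_comm b a]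

lemma SatFinfC.shift {L : LTS S AP} {t : CTree AP} {ρ : ℕ → S} {k : ℕ}
    (h : SatFinfC L t ρ k) (n : ℕ) : SatFinfC L t (shift ρ n) k := by
  intro i
  obtain ⟨j, hj, hsat⟩ := h (n + i)
  exact ⟨j, hj, by rwa [shift_shift, ← Nat.add_assoc]⟩

lemma Interleave.sublist_left {α : Type} {l₁ l₂ l : List α} (h : Interleave l₁ l₂ l) :
    l₁.Sublist l := by
  induction h with
  | nil => exact .refl _
  | left _ ih => exact ih.cons_cons _
  | right _ ih => exact ih.cons _

lemma Interleave.sublist_right {α : Type} {l₁ l₂ l : List α} (h : Interleave l₁ l₂ l) :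
    l₂.Sublist l := by
  induction h with
  | nil => exact .refl _
  | left _ ih => exact ih.cons _
  | right _ ih => exact ih.cons_cons _

lemma linExt_node_iff {θ : StateFormula AP} {cs : List (CTree AP)} {l : List (StateFormula AP)} :
    LinExt (.node θ cs) l ↔ ∃ l', l = θ :: l' ∧ LinExtF cs l' := by
  constructor
  · rintro ⟨h⟩
    exact ⟨_, rfl, h⟩
  · rintro ⟨l', rfl, h⟩
    exact .node h

lemma LinExtF.exists_sublist_linExt {ts : List (CTree AP)} {l : List (StateFormula AP)}
    (h : LinExtF ts l) {t : CTree AP} (ht : t ∈ ts) : ∃ l', l'.Sublist l ∧ LinExt t l' := by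
  induction ts generalizing l with
  | nil => cases ht
  | cons t' ts ih =>
    obtain _ | ⟨hhead, htail, hI⟩ := h
    rcases List.mem_cons.mp ht with rfl | ht
    · exact ⟨_, hI.sublist_left, hhead⟩
    · obtain ⟨l', hsub, hl'⟩ := ih htail ht
      exact ⟨l', hsub.trans hI.sublist_right, hl'⟩

def AvoidsWindow (L : LTS S AP) (θ : StateFormula AP) (ρ : ℕ → S) (p k : ℕ) : Prop :=
  ∀ j ≤ k, ¬ SatState L θ (ρ (p + j))

/-- `ws` pairs the nodes of `t`, listed in an order extending the ancestor order, with the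
starts of windows on which their state formulas fail. -/
theorem not_satFinfC_of_avoidsWindow (L : LTS S AP) {k : ℕ} {ρ : ℕ → S} :
    ∀ (t : CTree AP) (ws : List (StateFormula AP × ℕ)) (m : ℕ),
      LinExt t (ws.map Prod.fst) → ws.Pairwise (fun w w' => w.2 + k ≤ w'.2) →
      (∀ w ∈ ws, AvoidsWindow L w.1 ρ w.2 k) → (∀ w ∈ ws, m ≤ w.2) →
      ¬ SatFinfC L t (shift ρ m) k
  | .node θ cs, ws, m, hext, hpw, hwin, hm, hsat => by
    obtain ⟨l', hws, hcs⟩ := linExt_node_iff.mp hext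
    obtain _ | ⟨⟨θ', p⟩, ws'⟩ := ws
    · cases hws
    obtain ⟨rfl, rfl⟩ := List.cons.inj hws
    obtain ⟨hpw_head, hpw_tail⟩ := List.pairwise_cons.mp hpw
    have hmp : m ≤ p := hm _ List.mem_cons_self
    obtain ⟨j, hj, hsat_root⟩ := hsat (p - m)
    rw [shift_shift, show m + (p - m + j) = p + j by omega, SatC] at hsat_root
    rcases hsat_root with hθ | ⟨⟨c, hc⟩, -, hsat_child⟩
    · exact hwin _ List.mem_cons_self j hj (by simpa [shift] using hθ)
    obtain ⟨lc, hsub, hlc⟩ := hcs.exists_sublist_linExt hc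
    obtain ⟨wc, hwc, rfl⟩ := List.sublist_map_iff.mp hsub
    -- the child holds from `p + k` on, where all of its windows lie
    refine not_satFinfC_of_avoidsWindow L c wc (p + k) hlc (hpw_tail.sublist hwc)
      (fun w hw => hwin w (List.mem_cons_of_mem _ (hwc.subset hw)))
      (fun w hw => hpw_head w (hwc.subset hw)) ?_
    have := SatFinfC.shift (t := c) hsat_child (k - j)
    rwa [shift_shift, show p + j + (k - j) = p + k by omega] at this
termination_by t => sizeOf t
decreasing_by
  have := List.sizeOf_lt_of_mem hc
  simp only [CTree.node.sizeOf_spec]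
  omega

lemma appendSeq_append (a b : List S) (ρ : ℕ → S) (n : ℕ) :
    appendSeq (a ++ b) ρ (a.length + n) = appendSeq b ρ n := by
  unfold appendSeq
  by_cases h : n < b.length
  · rw [dif_pos (by simp only [List.length_append]; omega), dif_pos h]
    simp [List.getElem_append_right]
  · rw [dif_neg (by simp only [List.length_append]; omega), dif_neg h]
    congr 1
    simp only [List.length_append]
    omega

lemma appendSeq_append_mem (a b : List S) (ρ : ℕ → S) {n : ℕ} (h : n < a.length) :
    appendSeq (a ++ b) ρ n ∈ a := by
  unfold appendSeq
  rw [dif_pos (by simp only [List.length_append]; omega)]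
  simp [List.getElem_append_left h]

lemma mem_of_mem_flatten_replicate {k : ℕ} {u : List S} {s : S}
    (h : s ∈ (List.replicate k u).flatten) : s ∈ u := by
  obtain ⟨l, hl, hs⟩ := List.mem_flatten.mp h
  rwa [List.eq_of_mem_replicate hl] at hs

lemma length_flatten_replicate (k : ℕ) (u : List S) :
    (List.replicate k u).flatten.length = k * u.length := by
  simp [List.length_flatten]

theorem exists_avoidsWindow_pumpRun (L : LTS S AP) {k : ℕ} (hk : 1 ≤ k) (tail : ℕ → S) :
    ∀ (vs us : List (List S)) (ls : List (StateFormula AP)),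
      vs.length = us.length → us.length = ls.length → (∀ u ∈ us, 2 ≤ u.length) →
      (∀ p ∈ us.zip ls, ∀ s ∈ p.1, ¬ SatState L p.2 s) →
      ∃ ws : List (StateFormula AP × ℕ), ws.map Prod.fst = ls ∧
        ws.Pairwise (fun w w' => w.2 + k ≤ w'.2) ∧
        ∀ w ∈ ws, AvoidsWindow L w.1 (pumpRun k vs us tail) w.2 k
  | [], [], [], _, _, _, _ => ⟨[], rfl, .nil, by simp⟩
  | v :: vs, u :: us, θ :: ls, hvu, hul, hlen, havoid => by
    obtain ⟨ws, hmap, hpw, hwin⟩ := exists_avoidsWindow_pumpRun L hk tail vs us ls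
      (by simpa using hvu) (by simpa using hul) (fun w hw => hlen w (List.mem_cons_of_mem _ hw))
      (fun p hp => havoid p (List.mem_cons_of_mem _ hp))
    set F := (List.replicate k u).flatten
    have hF : k + 1 ≤ F.length := by
      rw [length_flatten_replicate]
      nlinarith [hlen u List.mem_cons_self]
    have hpump : pumpRun k (v :: vs) (u :: us) tail =
        appendSeq (v ++ F ++ pumpPrefix k vs us) tail := rfl
    refine ⟨(θ, v.length) :: ws.map (fun w => (w.1, (v ++ F).length + w.2)),
      by simp [← hmap, Function.comp_def], ?_, ?_⟩
    · refine List.pairwise_cons.mpr ⟨?_, List.pairwise_map.mpr (hpw.imp (by omega))⟩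
      simp only [List.mem_map, List.length_append]
      rintro _ ⟨w, -, rfl⟩
      omega
    · simp only [List.mem_cons, List.mem_map]
      rintro _ (rfl | ⟨w, hw, rfl⟩) j hj
      · rw [hpump, List.append_assoc, appendSeq_append]
        have hmem := appendSeq_append_mem F (pumpPrefix k vs us) tail (n := j) (by omega)
        exact havoid (u, θ) List.mem_cons_self _ (mem_of_mem_flatten_replicate hmem)
      · rw [hpump, Nat.add_assoc, appendSeq_append]
        exact hwin w hw j hj
  | [], _ :: _, _, h, _, _, _ | _ :: _, [], _, h, _, _, _ => by simp at h
  | _, [], _ :: _, _, h, _, _ | _, _ :: _, [], _, h, _, _ => by simp at h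

/-- If `U` is a realisable `ψ`-avoiding sequence in `L` with
realisation witness `(vs, tail)` and `k ≥ 1`, then the `k`-pumping `ρ_k` of the
witness satisfies `(ρ_k, k) ⊭ F_p^∞ ψ`. -/
theorem pumping_is_counterexample [Fintype S] (L : LTS S AP) (ψ : CTree AP)
    (U : AvoidingSeq L ψ) (vs : List (List S)) (tail : ℕ → S)
    (hw : IsRealWitness L U.loops vs tail) (k : ℕ) (hk : 1 ≤ k) :
    ¬ SatFinfC L ψ (pumpRun k vs U.loops tail) k := by
  obtain ⟨ws, hmap, hpw, hwin⟩ := exists_avoidsWindow_pumpRun L hk tail vs U.loops U.labels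
    hw.1 U.length_eq (fun u hu => (U.isLoop u hu).1) U.avoid
  exact not_satFinfC_of_avoidsWindow L ψ ws 0 (hmap ▸ U.linext) hpw hwin (fun _ _ => Nat.zero_le _)
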